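/- For all nonnegative integers m, n, and 0 ≤ i ≤ min(m,n), the quantity {m+n}!/({i}!·{m-i}!·{n-i}!) (with {j} = v^j - v^{-j}, {k}! = ∏{j}) is a Laurent polynomial in ℤ[v, v^{-1}], i.e., {i}!·{m-i}!·{n-i}! divides {m+n}! in ℤ[v,v^{-1}]. -/

import Mathlib

open LaurentPolynomial

/-- `{j} = v^j - v^{-j}` in `ℤ[v,v⁻¹]`. -/
noncomputable def qBrace (j : ℕ) : LaurentPolynomial ℤ := T (j : ℤ) - T (-(j : ℤ))

/-- `{k}! = ∏_{j=1}^k {j}`. -/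
noncomputable def qFact (k : ℕ) : LaurentPolynomial ℤ := ∏ j ∈ Finset.Icc 1 k, qBrace j

lemma qFact_zero : qFact 0 = 1 := by simp [qFact]

lemma qFact_succ (k : ℕ) : qFact (k + 1) = qFact k * qBrace (k + 1) := by
  rw [qFact, qFact, Finset.prod_Icc_succ_top (Nat.le_add_left 1 k)]

lemma qBrace_add (a b : ℕ) :
    qBrace (a + b) = T (b : ℤ) * qBrace a + T (-(a : ℤ)) * qBrace b := by
  simp only [qBrace, Nat.cast_add, mul_sub, ← T_add]
  ring_nf

lemma qFact_mul_dvd_aux : ∀ N, ∀ a b : ℕ, a + b = N → qFact a * qFact b ∣ qFact (a + b) := by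
  intro N
  induction N using Nat.strong_induction_on with
  | _ N IH =>
  intro a b hN
  have IH' : ∀ M, M < N → ∀ a b : ℕ, a + b = M → qFact a * qFact b ∣ qFact (a + b) := IH
  subst hN
  match a, b with
  | 0, b => simp [qFact_zero]
  | a, 0 => simp [qFact_zero]
  | a + 1, b + 1 =>
    have key : qFact (a + 1 + (b + 1)) =
        T ((b+1 : ℕ) : ℤ) * (qFact (a + (b + 1)) * qBrace (a + 1)) +
        T (-((a+1 : ℕ) : ℤ)) * (qFact (a + 1 + b) * qBrace (b + 1)) := by
      have h1 : a + 1 + (b + 1) = (a + (b + 1)) + 1 := by ring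
      rw [h1, qFact_succ]
      have h2 : a + (b + 1) + 1 = (a + 1) + (b + 1) := by ring
      rw [h2, qBrace_add (a+1) (b+1)]
      have h3 : a + 1 + b = a + (b + 1) := by ring
      rw [h3]
      ring
    rw [key]
    apply dvd_add
    · apply Dvd.dvd.mul_left
      have := IH' (a + (b + 1)) (by omega) a (b+1) rfl
      calc qFact (a+1) * qFact (b+1) = (qFact a * qFact (b+1)) * qBrace (a+1) := by
            rw [qFact_succ]; ring
        _ ∣ qFact (a + (b+1)) * qBrace (a+1) := mul_dvd_mul_right this _
    · apply Dvd.dvd.mul_left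
      have := IH' (a + 1 + b) (by omega) (a+1) b rfl
      calc qFact (a+1) * qFact (b+1) = (qFact (a+1) * qFact b) * qBrace (b+1) := by
            rw [qFact_succ (k := b)]; ring
        _ ∣ qFact (a + 1 + b) * qBrace (b+1) := mul_dvd_mul_right this _

lemma qFact_mul_dvd (a b : ℕ) : qFact a * qFact b ∣ qFact (a + b) :=
  qFact_mul_dvd_aux (a + b) a b rfl

/-- For `0 ≤ i ≤ min(m,n)`, the structure constant `{m+n}!/({i}!{m-i}!{n-i}!)` of
Habiro's product formula is a Laurent polynomial: `{i}!·{m-i}!·{n-i}!` divides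
`{m+n}!` in `ℤ[v,v⁻¹]`. -/
theorem habiro_structure_constant_integral (m n i : ℕ) (hi : i ≤ min m n) :
    qFact i * qFact (m - i) * qFact (n - i) ∣ qFact (m + n) := by
  have him : i ≤ m := le_trans hi (min_le_left _ _)
  have hin : i ≤ n := le_trans hi (min_le_right _ _)
  have h1 : qFact i * qFact (m - i) ∣ qFact m := by
    have := qFact_mul_dvd i (m - i)
    rwa [Nat.add_sub_cancel' him] at this
  have h2 : qFact (n - i) ∣ qFact n := by
    have := qFact_mul_dvd (n - i) i
    rw [Nat.sub_add_cancel hin] at this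
    exact (dvd_mul_right _ _).trans this
  exact (mul_dvd_mul h1 h2).trans (qFact_mul_dvd m n)
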